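/- arXiv:2003.13521 — 4 statements merged into one kernel-verified Lean document; each statement's English description precedes it below -/
import Mathlib

section
/- For every ε > 0 there exists n_ε such that for all n ≥ n_ε: if the bias b satisfies b ≥ (1+ε)·n/log n, then Breaker has a winning strategy in the (1:b) Maker-Breaker strong connectivity game on the complete digraph K⃗_n, i.e. Breaker can guarantee that at the end of play the digraph on [n] formed by Maker's claimed edges is not strongly connected. -/
/-- The board of the complete digraph on `Fin n`: all ordered pairs `(i, j)` with `i ≠ j`. -/
def diboard (n : ℕ) : Finset (Fin n × Fin n) :=
  Finset.univ.filter (fun p => p.1 ≠ p.2)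

/-- A digraph on `Fin n`, given by its edge set, is strongly connected if every vertex is
reachable from every other vertex by a directed path. -/
def StronglyConnected {n : ℕ} (E : Finset (Fin n × Fin n)) : Prop :=
  ∀ u v : Fin n, Relation.ReflTransGen (fun a c => (a, c) ∈ E) u v

/-- `MakerWins board b P M B` : in the (1 : b) Maker-Breaker game on `board`, from the
position where Maker has claimed `M`, Breaker has claimed `B`, and Maker is to move,
Maker can force that when the board is exhausted the final position satisfies
`P (Maker's set) (Breaker's set)`.  Maker claims one unclaimed element per turn, Breaker
then claims `b` unclaimed elements (or all remaining ones, if fewer than `b` remain). -/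
inductive MakerWins {X : Type*} [DecidableEq X] (board : Finset X) (b : ℕ)
    (P : Finset X → Finset X → Prop) : Finset X → Finset X → Prop
  | terminal {M B : Finset X} (hend : board \ (M ∪ B) = ∅) (hP : P M B) :
      MakerWins board b P M B
  | move {M B : Finset X} (x : X) (hx : x ∈ board \ (M ∪ B))
      (h : ∀ Y ⊆ board \ (insert x M ∪ B),
        Y.card = min b (board \ (insert x M ∪ B)).card →
        MakerWins board b P (insert x M) (B ∪ Y)) :
      MakerWins board b P M B

/-- `BreakerWins board b P M B` : in the (1 : b) Maker-Breaker game on `board`, from the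
position where Maker has claimed `M`, Breaker has claimed `B`, and Maker is to move,
Breaker can force that when the board is exhausted the final position satisfies
`P (Maker's set) (Breaker's set)`. -/
inductive BreakerWins {X : Type*} [DecidableEq X] (board : Finset X) (b : ℕ)
    (P : Finset X → Finset X → Prop) : Finset X → Finset X → Prop
  | terminal {M B : Finset X} (hend : board \ (M ∪ B) = ∅) (hP : P M B) :
      BreakerWins board b P M B
  | move {M B : Finset X} (hne : board \ (M ∪ B) ≠ ∅)
      (Y : ∀ x ∈ board \ (M ∪ B), Finset X)
      (hY : ∀ (x : X) (hx : x ∈ board \ (M ∪ B)),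
        Y x hx ⊆ board \ (insert x M ∪ B) ∧
        (Y x hx).card = min b (board \ (insert x M ∪ B)).card)
      (h : ∀ (x : X) (hx : x ∈ board \ (M ∪ B)),
        BreakerWins board b P (insert x M) (B ∪ Y x hx)) :
      BreakerWins board b P M B

/-
Breaker plays the Chvátal–Erdős box game on the out-stars of the vertices: a vertex whose whole
out-star Breaker claims before Maker claims any edge out of it has out-degree zero in Maker's
digraph. Breaker always answers inside the out-stars that Maker has not touched: if one of them
(other than the one Maker just entered) has at most `b` free edges he claims all of it, otherwise
he spreads his `b` edges so that the free parts of the untouched stars stay balanced. With `p`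
untouched stars, the total number of their free edges stays below the potential
`p (b - 1) H_{p-1}`; for `p = 2` this leaves a star with at most `b` free edges, so Breaker
completes a star before Maker has touched them all.
Initially the total is `n (n - 1)`, and `log n ≤ H_{n-1}` makes the potential large enough once
`b ≥ (1 + ε) n / log n`.
-/

open Finset

namespace Finset

variable {α : Type*} [DecidableEq α]

lemma filter_sdiff_comm (p : α → Prop) [DecidablePred p] (s t : Finset α) :
    (s \ t).filter p = s.filter p \ t := by
  ext; simp only [mem_filter, mem_sdiff]; tauto

lemma sdiff_insert_union_union (s M B Y : Finset α) (x : α) :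
    s \ (insert x M ∪ (B ∪ Y)) = (s \ (M ∪ B)).erase x \ Y := by
  ext e
  simp only [mem_sdiff, mem_union, mem_insert, mem_erase]
  tauto

end Finset

/-- One round of the box game: the `S` free cells of `q + 1` balanced untouched boxes lose a box
with `r` free cells to Maker and `b` cells to Breaker, and the potential `p (b - 1) H_{p-1}` of
`p` untouched boxes passes from `p = q + 1` to `p = q`. -/
lemma harmonic_potential_step {q S r : ℕ} (b : ℕ) (hq : 1 ≤ q)
    (hS : (S : ℚ) ≤ (q + 1) * (b - 1) * harmonic q) (havg : S ≤ (q + 1) * (r + 1)) :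
    (S : ℚ) - r - b ≤ q * (b - 1) * harmonic (q - 1) := by
  obtain ⟨m, rfl⟩ : ∃ m, q = m + 1 := ⟨q - 1, by omega⟩
  have havg' : (S : ℚ) ≤ (m + 2) * (r + 1) := by
    have : ((S : ℕ) : ℚ) ≤ ((m + 1 + 1) * (r + 1) : ℕ) := by exact_mod_cast havg
    push_cast at this; linarith
  have hrec : ((m + 1 : ℕ) : ℚ) * harmonic (m + 1) = (m + 1) * harmonic m + 1 := by
    rw [harmonic_succ]; push_cast; field_simp
  simp only [Nat.add_sub_cancel]
  push_cast at hS hrec ⊢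
  have key : (m + 2) * ((S : ℚ) - r - b) ≤ (m + 2) * ((m + 1) * (b - 1) * harmonic m) := by
    have h1 : ((m : ℚ) + 1) * S ≤ (m + 2) * ((m + 1) * (b - 1) * harmonic m + (b - 1)) := by
      have := mul_le_mul_of_nonneg_left hS (by positivity : (0 : ℚ) ≤ m + 1)
      linear_combination this + (m + 2) * (b - 1) * hrec
    nlinarith
  exact le_of_mul_le_mul_left key (by positivity)

namespace BreakerWins

variable {X : Type*} [DecidableEq X] {board : Finset X} {b : ℕ}
  {P : Finset X → Finset X → Prop}

theorem mono {Q : Finset X → Finset X → Prop} (hPQ : ∀ M B, P M B → Q M B) {M B : Finset X}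
    (h : BreakerWins board b P M B) : BreakerWins board b Q M B := by
  induction h with
  | terminal hend hP => exact terminal hend (hPQ _ _ hP)
  | move hne Y hY _ ih => exact move hne Y hY ih

theorem of_invariant (I : Finset X → Finset X → Prop)
    (hend : ∀ M B, board \ (M ∪ B) = ∅ → I M B → P M B)
    (hstep : ∀ M B, I M B → ∀ x ∈ board \ (M ∪ B), ∃ Y ⊆ (board \ (M ∪ B)).erase x,
      #Y = min b #((board \ (M ∪ B)).erase x) ∧ I (insert x M) (B ∪ Y))
    {M B : Finset X} (h : I M B) : BreakerWins board b P M B := by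
  induction hN : #(board \ (M ∪ B)) using Nat.strong_induction_on generalizing M B with
  | _ N ih =>
  by_cases hfree : board \ (M ∪ B) = ∅
  · exact terminal hfree (hend M B hfree h)
  choose Y hYsub hYcard hI using hstep M B h
  have hfree' : ∀ x, board \ (insert x M ∪ B) = (board \ (M ∪ B)).erase x := fun x => by
    rw [insert_union, sdiff_insert]
  refine move hfree Y (fun x hx => hfree' x ▸ ⟨hYsub x hx, hYcard x hx⟩) fun x hx => ?_
  refine ih _ ?_ (hI x hx) rfl
  rw [← hN, sdiff_insert_union_union]
  exact (card_le_card sdiff_subset).trans_lt (card_erase_lt_of_mem hx)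

end BreakerWins

section BoxGame

variable {X ι : Type*} [DecidableEq ι] (box : X → ι)

def boxPart (S : Finset X) (v : ι) : Finset X := S.filter (box · = v)

def IsBalancedOn (S : Finset X) (A : Finset ι) : Prop :=
  ∀ v ∈ A, ∀ w ∈ A, #(boxPart box S v) ≤ #(boxPart box S w) + 1

/-- Here and below `S` is the set of free cells: Breaker owns all of box `v`, Maker none of it. -/
def Secures (M S : Finset X) (v : ι) : Prop :=
  (∀ x ∈ M, box x ≠ v) ∧ boxPart box S v = ∅

/-- `A` is the set of boxes still untouched by Maker; `potential` is the Chvátal–Erdős criterion. -/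
structure IsBoxPosition (b : ℕ) (M S : Finset X) (A : Finset ι) : Prop where
  two_le_card : 2 ≤ #A
  avoids : ∀ v ∈ A, ∀ x ∈ M, box x ≠ v
  balanced : IsBalancedOn box S A
  potential : (#(S.filter (box · ∈ A)) : ℚ) ≤ #A * (b - 1) * harmonic (#A - 1)

def BoxInvariant (b : ℕ) (M S : Finset X) : Prop :=
  (∃ v, Secures box M S v) ∨ ∃ A, IsBoxPosition box b M S A

variable {box}

lemma card_filter_box_mem_eq_sum (S : Finset X) (A : Finset ι) :
    #(S.filter (box · ∈ A)) = ∑ v ∈ A, #(boxPart box S v) := by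
  have hmaps : Set.MapsTo box (S.filter (box · ∈ A)) A := fun x hx => (mem_filter.1 hx).2
  rw [card_eq_sum_card_fiberwise hmaps]
  refine sum_congr rfl fun v hv => ?_
  rw [filter_filter, boxPart]
  exact congrArg card (filter_congr fun x _ => ⟨And.right, fun hx => ⟨hx ▸ hv, hx⟩⟩)

variable {b : ℕ} {M S : Finset X} {A : Finset ι}

lemma IsBoxPosition.three_le_card (h : IsBoxPosition box b M S A)
    (hlarge : ∀ v ∈ A, b ≤ #(boxPart box S v)) : 3 ≤ #A := by
  by_contra hA
  have hA2 : #A = 2 := by have := h.two_le_card; omega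
  have htotal : #A * b ≤ #(S.filter (box · ∈ A)) := by
    rw [card_filter_box_mem_eq_sum, ← smul_eq_mul]
    exact card_nsmul_le_sum _ _ _ hlarge
  have hpot := h.potential
  rw [hA2] at hpot htotal
  have : ((2 * b : ℕ) : ℚ) ≤ #(S.filter (box · ∈ A)) := by exact_mod_cast htotal
  norm_num [harmonic] at hpot this
  linarith

lemma IsBoxPosition.potential_erase (h : IsBoxPosition box b M S A) (x : X) :
    (#(S.filter (box · ∈ A.erase (box x))) : ℚ) - b ≤
      #(A.erase (box x)) * (b - 1) * harmonic (#(A.erase (box x)) - 1) := by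
  by_cases hxA : box x ∈ A
  · have hcard : #A = #(A.erase (box x)) + 1 := (card_erase_add_one hxA).symm
    have hsplit := card_filter_box_mem_eq_sum (box := box) S A
    rw [← add_sum_erase _ _ hxA, ← card_filter_box_mem_eq_sum] at hsplit
    have havg : #(S.filter (box · ∈ A)) ≤
        (#(A.erase (box x)) + 1) * (#(boxPart box S (box x)) + 1) := by
      rw [card_filter_box_mem_eq_sum, ← hcard, ← smul_eq_mul]
      exact sum_le_card_nsmul _ _ _ fun v hv => h.balanced v hv _ hxA
    have hpot := h.potential
    rw [hcard, Nat.add_sub_cancel] at hpot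
    push_cast at hpot
    have := harmonic_potential_step b (by have := h.two_le_card; omega) hpot havg
    rw [hsplit] at this
    push_cast at this
    linarith
  · rw [erase_eq_of_notMem hxA]
    linarith [h.potential, (Nat.cast_nonneg b : (0 : ℚ) ≤ b)]

lemma BoxInvariant.exists_avoided_box (h : BoxInvariant box b M ∅) :
    ∃ v, ∀ x ∈ M, box x ≠ v := by
  rcases h with ⟨v, hv⟩ | ⟨A, hA⟩
  · exact ⟨v, hv.1⟩
  · obtain ⟨v, hv⟩ : A.Nonempty := card_pos.1 (by have := hA.two_le_card; omega)
    exact ⟨v, hA.avoids v hv⟩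

variable [DecidableEq X]

lemma boxPart_erase_of_ne {x : X} {v : ι} (h : box x ≠ v) :
    boxPart box (S.erase x) v = boxPart box S v := by
  rw [boxPart, filter_erase, erase_eq_of_notMem (by simp [h])]
  rfl

lemma IsBalancedOn.erase_box (h : IsBalancedOn box S A) (x : X) :
    IsBalancedOn box (S.erase x) (A.erase (box x)) := by
  intro v hv w hw
  rw [boxPart_erase_of_ne (Ne.symm (ne_of_mem_erase hv)),
    boxPart_erase_of_ne (Ne.symm (ne_of_mem_erase hw))]
  exact h v (mem_of_mem_erase hv) w (mem_of_mem_erase hw)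

/-- Removing a cell from a fullest box keeps the boxes balanced. -/
lemma IsBalancedOn.exists_erase (h : IsBalancedOn box S A)
    (hne : (S.filter (box · ∈ A)).Nonempty) :
    ∃ x ∈ S.filter (box · ∈ A), IsBalancedOn box (S.erase x) A := by
  obtain ⟨y, hy⟩ := hne
  obtain ⟨v₀, hv₀, hmax⟩ := exists_max_image A (fun v => #(boxPart box S v))
    ⟨box y, (mem_filter.1 hy).2⟩
  obtain ⟨x, hx⟩ : (boxPart box S v₀).Nonempty := by
    refine card_pos.1 (lt_of_lt_of_le (card_pos.2 ⟨y, ?_⟩) (hmax _ (mem_filter.1 hy).2))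
    exact mem_filter.2 ⟨(mem_filter.1 hy).1, rfl⟩
  obtain ⟨hxS, rfl⟩ := mem_filter.1 hx
  refine ⟨x, mem_filter.2 ⟨hxS, hv₀⟩, fun v hv w hw => ?_⟩
  have hcard : #(boxPart box (S.erase x) (box x)) = #(boxPart box S (box x)) - 1 := by
    rw [boxPart, filter_erase]; exact card_erase_of_mem hx
  have hpart : ∀ u, u ≠ box x → boxPart box (S.erase x) u = boxPart box S u :=
    fun u hu => boxPart_erase_of_ne (Ne.symm hu)
  have hpos : 0 < #(boxPart box S (box x)) := card_pos.2 ⟨x, hx⟩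
  have hvw := h v hv w hw
  have hv' := hmax v hv
  by_cases hvx : v = box x <;> by_cases hwx : w = box x
  · subst hvx hwx; omega
  · subst hvx; rw [hcard, hpart w hwx]; omega
  · subst hwx; rw [hcard, hpart v hvx]; omega
  · rw [hpart v hvx, hpart w hwx]; exact hvw

lemma IsBalancedOn.exists_subset_sdiff (h : IsBalancedOn box S A) {k : ℕ}
    (hk : k ≤ #(S.filter (box · ∈ A))) :
    ∃ Y ⊆ S.filter (box · ∈ A), #Y = k ∧ IsBalancedOn box (S \ Y) A := by
  induction k generalizing S with
  | zero => exact ⟨∅, empty_subset _, card_empty, by simpa using h⟩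
  | succ k ih =>
    obtain ⟨x, hx, hbal⟩ := h.exists_erase (card_pos.1 (by omega))
    have hk' : k ≤ #((S.erase x).filter (box · ∈ A)) := by
      rw [filter_erase, card_erase_of_mem hx]; omega
    obtain ⟨Y, hYsub, hYcard, hYbal⟩ := ih hbal hk'
    rw [filter_erase] at hYsub
    have hxY : x ∉ Y := fun hxY => (mem_erase.1 (hYsub hxY)).1 rfl
    refine ⟨insert x Y, insert_subset hx (hYsub.trans (erase_subset _ _)),
      by rw [card_insert_of_notMem hxY, hYcard], ?_⟩
    rwa [show S \ insert x Y = S.erase x \ Y by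
      ext; simp only [mem_sdiff, mem_insert, mem_erase]; tauto]

lemma Secures.claim {v : ι} (h : Secures box M S v) {x : X} (hx : x ∈ S) (Y : Finset X) :
    Secures box (insert x M) (S.erase x \ Y) v := by
  have hxv : box x ≠ v := fun hxv => notMem_empty x (h.2 ▸ mem_filter.2 ⟨hx, hxv⟩)
  refine ⟨fun y hy => ?_, subset_empty.1 (h.2 ▸ filter_subset_filter _ ?_)⟩
  · rcases mem_insert.1 hy with rfl | hy
    exacts [hxv, h.1 y hy]
  · exact sdiff_subset.trans (erase_subset _ _)

lemma IsBoxPosition.exists_secures_response (h : IsBoxPosition box b M S A) {x : X}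
    {v : ι} (hv : v ∈ A) (hvx : box x ≠ v) (hsmall : #(boxPart box S v) ≤ b) :
    ∃ Y ⊆ S.erase x, #Y = min b #(S.erase x) ∧
      Secures box (insert x M) (S.erase x \ Y) v := by
  have hsub : boxPart box (S.erase x) v ⊆ S.erase x := filter_subset _ _
  obtain ⟨Y, hpartY, hYsub, hYcard⟩ := exists_subsuperset_card_eq hsub
    (le_min (boxPart_erase_of_ne hvx ▸ hsmall) (card_le_card hsub)) (min_le_right _ _)
  refine ⟨Y, hYsub, hYcard, fun y hy => ?_, ?_⟩
  · rcases mem_insert.1 hy with rfl | hy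
    exacts [hvx, h.avoids v hv y hy]
  · rw [boxPart, filter_sdiff_comm, sdiff_eq_empty_iff_subset]
    exact hpartY

lemma IsBoxPosition.exists_balanced_response (h : IsBoxPosition box b M S A) (x : X)
    (hlarge : ∀ v ∈ A.erase (box x), b < #(boxPart box S v)) :
    ∃ Y ⊆ S.erase x, #Y = min b #(S.erase x) ∧
      IsBoxPosition box b (insert x M) (S.erase x \ Y) (A.erase (box x)) := by
  have hcardA : #A - 1 ≤ #(A.erase (box x)) := pred_card_le_card_erase
  have h2 := h.two_le_card
  obtain ⟨w, hw⟩ : (A.erase (box x)).Nonempty := card_pos.1 (by omega)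
  have h3 : 3 ≤ #A := h.three_le_card fun v hv => by
    have := h.balanced w (mem_of_mem_erase hw) v hv
    have := hlarge w hw
    omega
  have hcells : (S.erase x).filter (box · ∈ A.erase (box x)) =
      S.filter (box · ∈ A.erase (box x)) := by
    rw [filter_erase, erase_eq_of_notMem (by simp)]
  have hb : b ≤ #((S.erase x).filter (box · ∈ A.erase (box x))) := by
    refine (hlarge w hw).le.trans (card_le_card fun y hy => ?_)
    obtain ⟨hyS, rfl⟩ := mem_filter.1 hy
    exact hcells ▸ mem_filter.2 ⟨hyS, hw⟩
  obtain ⟨Y, hYsub, hYcard, hbal⟩ := (h.balanced.erase_box x).exists_subset_sdiff hb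
  have hYS : Y ⊆ S.erase x := hYsub.trans (filter_subset _ _)
  refine ⟨Y, hYS, by rw [hYcard, min_eq_left (hYcard ▸ card_le_card hYS)], by omega,
    fun v hv y hy => ?_, hbal, ?_⟩
  · rcases mem_insert.1 hy with rfl | hy
    exacts [Ne.symm (ne_of_mem_erase hv), h.avoids v (mem_of_mem_erase hv) y hy]
  · rw [filter_sdiff_comm, card_sdiff_of_subset hYsub, hYcard, Nat.cast_sub hb, hcells]
    exact h.potential_erase x

lemma BoxInvariant.exists_response (h : BoxInvariant box b M S) {x : X} (hx : x ∈ S) :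
    ∃ Y ⊆ S.erase x, #Y = min b #(S.erase x) ∧
      BoxInvariant box b (insert x M) (S.erase x \ Y) := by
  rcases h with ⟨v, hv⟩ | ⟨A, hA⟩
  · obtain ⟨Y, hYsub, hYcard⟩ := exists_subset_card_eq (min_le_right b #(S.erase x))
    exact ⟨Y, hYsub, hYcard, Or.inl ⟨v, hv.claim hx Y⟩⟩
  by_cases hsmall : ∃ v ∈ A.erase (box x), #(boxPart box S v) ≤ b
  · obtain ⟨v, hv, hvb⟩ := hsmall
    obtain ⟨Y, hYsub, hYcard, hsec⟩ :=
      hA.exists_secures_response (mem_of_mem_erase hv) (Ne.symm (ne_of_mem_erase hv)) hvb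
    exact ⟨Y, hYsub, hYcard, Or.inl ⟨v, hsec⟩⟩
  · push Not at hsmall
    obtain ⟨Y, hYsub, hYcard, hpos⟩ := hA.exists_balanced_response x hsmall
    exact ⟨Y, hYsub, hYcard, Or.inr ⟨_, hpos⟩⟩

theorem BreakerWins.exists_avoided_box (board : Finset X) (box : X → ι) {A : Finset ι} {s : ℕ}
    (hA : 2 ≤ #A) (hsize : ∀ v ∈ A, #(boxPart box board v) = s)
    (hs : (s : ℚ) ≤ (b - 1) * harmonic (#A - 1)) :
    BreakerWins board b (fun M _ => ∃ v, ∀ x ∈ M, box x ≠ v) ∅ ∅ := by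
  refine BreakerWins.of_invariant (fun M B => BoxInvariant box b M (board \ (M ∪ B)))
    (fun M B hend hI => (hend ▸ hI).exists_avoided_box) (fun M B hI x hx => ?_)
    (Or.inr ⟨A, ?_⟩)
  · obtain ⟨Y, hYsub, hYcard, hI'⟩ := hI.exists_response hx
    exact ⟨Y, hYsub, hYcard, by rwa [sdiff_insert_union_union]⟩
  · have htotal : #(board.filter (box · ∈ A)) = #A * s := by
      rw [card_filter_box_mem_eq_sum, sum_congr rfl hsize, sum_const, smul_eq_mul]
    refine ⟨hA, by simp, fun v hv w hw => ?_, ?_⟩ <;> simp only [empty_union, sdiff_empty]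
    · rw [hsize v hv, hsize w hw]; omega
    · rw [htotal, Nat.cast_mul, mul_assoc]
      exact mul_le_mul_of_nonneg_left hs (Nat.cast_nonneg _)

end BoxGame

lemma card_boxPart_fst_diboard (n : ℕ) (v : Fin n) :
    #(boxPart Prod.fst (diboard n) v) = n - 1 := by
  have : boxPart Prod.fst (diboard n) v = {v} ×ˢ univ.erase v := by
    ext ⟨a, c⟩; simp [boxPart, diboard]; grind
  rw [this, card_product, card_singleton, card_erase_of_mem (mem_univ v), card_univ,
    Fintype.card_fin, one_mul]

lemma not_stronglyConnected_of_forall_fst_ne {n : ℕ} (hn : 2 ≤ n) {M : Finset (Fin n × Fin n)}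
    {v : Fin n} (hv : ∀ e ∈ M, e.1 ≠ v) : ¬ StronglyConnected M := by
  intro h
  obtain ⟨u, -, hu⟩ := exists_mem_ne (s := (univ : Finset (Fin n))) (by simp; omega) v
  rcases (h v u).cases_head with rfl | ⟨c, hc, -⟩
  exacts [hu rfl, hv _ hc rfl]

lemma eventually_log_le_mul {ε : ℝ} (hε : 0 < ε) :
    ∀ᶠ n : ℕ in Filter.atTop, Real.log n ≤ ε * n := by
  filter_upwards [tendsto_natCast_atTop_atTop.eventually (Real.isLittleO_log_id_atTop.bound hε)]
    with n hn
  simpa using (le_abs_self _).trans hn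

lemma sub_one_le_mul_harmonic {n b : ℕ} {ε : ℝ} (hn : 2 ≤ n) (hlog : Real.log n ≤ ε * n)
    (hb : (1 + ε) * n / Real.log n ≤ b) :
    ((n - 1 : ℕ) : ℚ) ≤ (b - 1) * harmonic (n - 1) := by
  have hlogpos : 0 < Real.log n := Real.log_pos (by exact_mod_cast hn)
  have hH : Real.log n ≤ harmonic (n - 1) := by
    simpa [Nat.sub_add_cancel (by omega : 1 ≤ n)] using log_add_one_le_harmonic (n - 1)
  have hbn : (1 + ε) * n ≤ b * Real.log n := (div_le_iff₀ hlogpos).1 hb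
  have hε : 0 < ε := pos_of_mul_pos_left (hlogpos.trans_le hlog) (Nat.cast_nonneg n)
  have hb1 : (1 : ℝ) ≤ b :=
    Nat.one_le_cast.2 (Nat.cast_pos.1 ((by positivity : (0 : ℝ) < _).trans_le hb))
  have : (n : ℝ) - 1 ≤ (b - 1) * harmonic (n - 1) := calc
    (n : ℝ) - 1 ≤ (1 + ε) * n - ε * n := by linarith
    _ ≤ b * Real.log n - Real.log n := by linarith
    _ = (b - 1) * Real.log n := by ring
    _ ≤ (b - 1) * harmonic (n - 1) := mul_le_mul_of_nonneg_left hH (sub_nonneg.2 hb1)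
  rw [Nat.cast_sub (by omega : 1 ≤ n), Nat.cast_one]
  exact_mod_cast this

/-- For every `ε > 0` there is `n_ε` such that for all `n ≥ n_ε`, if `b ≥ (1+ε)·n / log n`
then Breaker has a winning strategy in the (1 : b) strong connectivity game on the
complete digraph on `n` vertices: Breaker can guarantee that at the end of play Maker's
digraph is not strongly connected. -/
theorem breaker_wins_strong_connectivity (ε : ℝ) (hε : 0 < ε) :
    ∃ nε : ℕ, ∀ n : ℕ, nε ≤ n → ∀ b : ℕ,
      (1 + ε) * n / Real.log n ≤ (b : ℝ) →
      BreakerWins (diboard n) b (fun M _ => ¬ StronglyConnected M) ∅ ∅ := by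
  obtain ⟨N, hN⟩ := Filter.eventually_atTop.1
    ((eventually_log_le_mul hε).and (Filter.eventually_ge_atTop 2))
  refine ⟨N, fun n hn b hb => ?_⟩
  obtain ⟨hlog, hn2⟩ := hN n hn
  refine (BreakerWins.exists_avoided_box (diboard n) Prod.fst (A := univ) ?_
    (fun v _ => card_boxPart_fst_diboard n v) ?_).mono ?_
  · simpa using hn2
  · simpa using sub_one_le_mul_harmonic hn2 hlog hb
  · rintro M - ⟨v, hv⟩
    exact not_stronglyConnected_of_forall_fst_ne hn2 hv
end

section
/- Fix α ∈ (0,1). There exists K₀ = K₀(α) such that for every integer K ≥ K₀ (in particular any K ≥ (2 − 2·log(1−α))/α sufficiently large with respect to α) we have lim_{n→∞} Σ_{s=K}^{⌊(1−α)²·n⌋} ( (n·e/s) · ( s/((1−α)·n) )^K )^s = 0. -/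
open Filter Real

/-!
For `s ≤ (1-α)²n` the base `b` of the `s`-th term is `e/(1-α)^K · (s/n)^(K-1) ≤ e(1-α)^(K-2)`, which is
at most `1/2` once `K` is large. Then `b^s ≤ 2b·2^{-s}`, so the `s`-th term is at most
`2e/((1-α)^K n^(K-1)) · s^(K-1) 2^{-s}`; the series `∑ s^(K-1) 2^{-s}` converges and the prefactor
tends to `0`.
-/

theorem tendsto_finset_sum_zero_of_le_mul_summable {α ι : Type*} {l : Filter α}
    {f : α → ι → ℝ} {a : α → ℝ} {g : ι → ℝ} (S : α → Finset ι)
    (hf : ∀ x, ∀ i ∈ S x, 0 ≤ f x i) (hfg : ∀ x, ∀ i ∈ S x, f x i ≤ a x * g i)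
    (ha0 : ∀ x, 0 ≤ a x) (ha : Tendsto a l (nhds 0)) (hg0 : ∀ i, 0 ≤ g i) (hg : Summable g) :
    Tendsto (fun x => ∑ i ∈ S x, f x i) l (nhds 0) := by
  refine squeeze_zero (fun x => Finset.sum_nonneg (hf x)) (fun x => ?_)
    (by simpa using ha.mul_const (∑' i, g i))
  calc ∑ i ∈ S x, f x i ≤ ∑ i ∈ S x, a x * g i := Finset.sum_le_sum (hfg x)
    _ = a x * ∑ i ∈ S x, g i := (Finset.mul_sum _ _ _).symm
    _ ≤ a x * ∑' i, g i :=
      mul_le_mul_of_nonneg_left (hg.sum_le_tsum _ fun i _ => hg0 i) (ha0 x)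

theorem pow_mul_le_mul_pow {R : Type*} [Semiring R] [PartialOrder R] [IsOrderedRing R]
    {b c : R} (hb : 0 ≤ b) (hbc : b ≤ c) {s : ℕ} (hs : 0 < s) : b ^ s * c ≤ b * c ^ s := by
  obtain ⟨t, rfl⟩ := Nat.exists_eq_add_of_lt hs
  have hc : 0 ≤ c := hb.trans hbc
  rw [zero_add, pow_succ', pow_succ, mul_assoc]
  gcongr

theorem expander_summand_le {β c : ℝ} (hβ : 0 < β) (hc : 0 ≤ c) {k n s : ℕ}
    (hcβ : c * β ^ k ≤ 1 / 2) (hs : 0 < s) (hsn : (s : ℝ) ≤ β ^ 2 * n) :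
    (((n : ℝ) * c / s) * ((s : ℝ) / (β * n)) ^ ((k + 2 : ℕ) : ℝ)) ^ (s : ℝ) ≤
      2 * c / β ^ (k + 2) / n ^ (k + 1) * ((s : ℝ) ^ (k + 1) * (1 / 2) ^ s) := by
  have hs0 : (0 : ℝ) < s := by exact_mod_cast hs
  have hn : (0 : ℝ) < n := by nlinarith
  have hn' := hn.ne'
  have hβ' := hβ.ne'
  have hbase : (n : ℝ) * c / s * ((s : ℝ) / (β * n)) ^ (k + 2)
      = c / β ^ (k + 2) * ((s : ℝ) / n) ^ (k + 1) := by
    rw [div_pow, div_pow, mul_pow]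
    field_simp
    ring
  rw [rpow_natCast, rpow_natCast, hbase]
  have hb0 : 0 ≤ c / β ^ (k + 2) * ((s : ℝ) / n) ^ (k + 1) := by positivity
  have hb : c / β ^ (k + 2) * ((s : ℝ) / n) ^ (k + 1) ≤ 1 / 2 := calc
    _ ≤ c / β ^ (k + 2) * (β ^ 2) ^ (k + 1) := by
      gcongr
      rwa [div_le_iff₀ hn]
    _ = c * β ^ k := by field_simp; ring
    _ ≤ 1 / 2 := hcβ
  have hgeom := pow_mul_le_mul_pow hb0 hb hs
  calc _ ≤ 2 * (c / β ^ (k + 2) * ((s : ℝ) / n) ^ (k + 1)) * (1 / 2) ^ s := by linarith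
    _ = _ := by rw [div_pow]; field_simp

/-- For fixed `α ∈ (0,1)` there is `K₀ = K₀(α)` such that for every integer `K ≥ K₀`,
`Σ_{s=K}^{⌊(1−α)²·n⌋} ((n·e/s) · (s/((1−α)·n))^K)^s → 0` as `n → ∞`. -/
theorem sum_expander_failure_tendsto_zero (α : ℝ) (hα0 : 0 < α) (hα1 : α < 1) :
    ∃ K₀ : ℕ, ∀ K : ℕ, K₀ ≤ K →
      Tendsto (fun n : ℕ =>
          ∑ s ∈ Finset.Icc K ⌊(1 - α) ^ 2 * (n : ℝ)⌋₊,
            (((n : ℝ) * Real.exp 1 / s) * ((s : ℝ) / ((1 - α) * n)) ^ (K : ℝ)) ^ (s : ℝ))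
        atTop (nhds 0) := by
  have hβ0 : 0 < 1 - α := by linarith
  obtain ⟨m, hm⟩ := exists_pow_lt_of_lt_one (by positivity : 0 < 1 / (2 * exp 1))
    (by linarith : 1 - α < 1)
  refine ⟨m + 2, fun K hK => ?_⟩
  obtain ⟨k, rfl⟩ : ∃ k, K = k + 2 := ⟨K - 2, by omega⟩
  have hsmall : exp 1 * (1 - α) ^ k ≤ 1 / 2 := calc
    exp 1 * (1 - α) ^ k ≤ exp 1 * (1 / (2 * exp 1)) := by
      gcongr
      exact (pow_le_pow_of_le_one hβ0.le (by linarith) (by omega)).trans hm.le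
    _ = 1 / 2 := by field_simp
  refine tendsto_finset_sum_zero_of_le_mul_summable _ (fun n s _ => by positivity)
    (fun n s hs =>
      have ⟨hKs, hsn⟩ := Finset.mem_Icc.1 hs
      expander_summand_le hβ0 (exp_pos 1).le hsmall (by omega)
        ((Nat.cast_le.2 hsn).trans (Nat.floor_le (by positivity))))
    (fun n => by positivity)
    (tendsto_const_nhds.div_atTop
      ((tendsto_pow_atTop (Nat.succ_ne_zero k)).comp tendsto_natCast_atTop_atTop))
    (fun s => by positivity)
    (summable_pow_mul_geometric_of_norm_lt_one (k + 1) (by norm_num))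
end

section
/- Fix α ∈ (0,1). There exists K₀ = K₀(α) such that for every integer K ≥ K₀ the following holds with high probability (probability tending to 1 as n → ∞) in the random digraph D of the adversarial K-out/K-in model: for every nonempty S ⊆ [n] with |S| ≤ (1−α)²·n, the edge sets {(i,j) ∈ E(D) : i ∈ S, j ∉ S} and {(i,j) ∈ E(D) : i ∉ S, j ∈ S} are both nonempty. -/
open scoped Classical

/-- A configuration of the K-out/K-in model on `Fin n`: for each vertex `v`, a pair of
sets `(OUT v, IN v)`. -/
abbrev Config (n : ℕ) := (Fin n → Finset (Fin n)) × (Fin n → Finset (Fin n))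

/-- The configurations that are valid for the adversarial choices `A B` and parameter
`K`: for each vertex `v`, `OUT v` is a `K`-element subset of `A v` and `IN v` is a
`K`-element subset of `B v`.  The random digraph of the model is a uniformly random
element of this finite set (this is exactly choosing each `OUT v` uniformly among the
`K`-subsets of `A v` and each `IN v` uniformly among the `K`-subsets of `B v`, all `2n`
choices independently). -/
noncomputable def validConfigs (n K : ℕ) (A B : Fin n → Finset (Fin n)) :
    Finset (Config n) :=
  Finset.univ.filter (fun c =>
    ∀ v : Fin n, c.1 v ⊆ A v ∧ (c.1 v).card = K ∧ c.2 v ⊆ B v ∧ (c.2 v).card = K)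

/-- `(i, j)` is an edge of the digraph `D` associated with the configuration `c`:
`E(D) = {(v,u) : u ∈ OUT(v)} ∪ {(u,v) : u ∈ IN(v)}`. -/
def hasEdge {n : ℕ} (c : Config n) (i j : Fin n) : Prop :=
  j ∈ c.1 i ∨ i ∈ c.2 j

/-- The adversarial sets `A v`, `B v` are arbitrary subsets of `[n] ∖ {v}` of size
`⌈(1−α)·n⌉`. -/
def ValidAdversary {n : ℕ} (α : ℝ) (A B : Fin n → Finset (Fin n)) : Prop :=
  ∀ v : Fin n, A v ⊆ Finset.univ.erase v ∧ (A v).card = ⌈(1 - α) * (n : ℝ)⌉₊ ∧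
    B v ⊆ Finset.univ.erase v ∧ (B v).card = ⌈(1 - α) * (n : ℝ)⌉₊

/-- The probability, under the uniform distribution on the valid configurations for
`n, K, A, B`, of the event `E`. -/
noncomputable def probOf (n K : ℕ) (A B : Fin n → Finset (Fin n))
    (E : Config n → Prop) : ℝ :=
  ((validConfigs n K A B).filter E).card / (validConfigs n K A B).card

/-! If no edge leaves `S`, then `OUT(v) ⊆ S` for every `v ∈ S`; if none enters `S`, then
`IN(v) ⊆ S` for every `v ∈ S`. Since `|A(v)| = |B(v)| = m = ⌈(1-α)n⌉`, each of these has
probability at most `((s/m)^K)^s` for `|S| = s`. By `C(n,s) ≤ (en/s)^s`, the union bound over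
all `S` with `1 ≤ |S| ≤ (1-α)²n` is at most `2 ∑ₛ bₛ^s` with `bₛ = e (s/m)^(K-2) · ns/m²`.
Here `s/m ≤ 1-α`, so for `K` large `bₛ ≤ ns/(2m²)`, which is both `≤ 1/2` and `O(s/n)`, hence
`∑ₛ bₛ^s ≤ ∑ₛ O(s/n) 2^{-s} = O(1/n)`. -/

open Finset Real Filter Topology

lemma Nat.descFactorial_mul_pow_le {a m : ℕ} (h : a ≤ m) (K : ℕ) :
    a.descFactorial K * m ^ K ≤ m.descFactorial K * a ^ K := by
  induction K with
  | zero => simp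
  | succ K ih =>
    have step : (a - K) * m ≤ (m - K) * a := by
      rw [Nat.sub_mul, Nat.sub_mul, Nat.mul_comm m a]
      exact Nat.sub_le_sub_left (Nat.mul_le_mul_left K h) _
    calc a.descFactorial (K + 1) * m ^ (K + 1)
        = ((a - K) * m) * (a.descFactorial K * m ^ K) := by
          rw [Nat.descFactorial_succ, pow_succ]; ring
      _ ≤ ((m - K) * a) * (m.descFactorial K * a ^ K) := Nat.mul_le_mul step ih
      _ = m.descFactorial (K + 1) * a ^ (K + 1) := by
          rw [Nat.descFactorial_succ, pow_succ]; ring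

lemma Nat.choose_le_div_pow_mul_choose {a m : ℕ} (h : a ≤ m) (K : ℕ) :
    (a.choose K : ℝ) ≤ ((a : ℝ) / m) ^ K * m.choose K := by
  rcases Nat.lt_or_ge m K with hmK | hKm
  · simp only [Nat.choose_eq_zero_of_lt (h.trans_lt hmK), Nat.cast_zero]; positivity
  rcases Nat.eq_zero_or_pos m with rfl | hm
  · obtain rfl : a = 0 := Nat.le_zero.1 h
    obtain rfl : K = 0 := Nat.le_zero.1 hKm
    simp
  have key : (a.choose K * m ^ K : ℝ) ≤ m.choose K * a ^ K := by
    have := Nat.descFactorial_mul_pow_le h K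
    rw [Nat.descFactorial_eq_factorial_mul_choose, Nat.descFactorial_eq_factorial_mul_choose,
      mul_assoc, mul_assoc] at this
    exact_mod_cast Nat.le_of_mul_le_mul_left this K.factorial_pos
  rw [div_pow, div_mul_eq_mul_div, le_div_iff₀ (by positivity)]
  linarith

lemma Nat.choose_le_exp_mul_div_pow (n s : ℕ) :
    (n.choose s : ℝ) ≤ (exp 1 * n / s) ^ s := by
  rcases Nat.eq_zero_or_pos s with rfl | hs
  · simp
  have hs' : (0 : ℝ) < s := by exact_mod_cast hs
  have hfact : (s : ℝ) ^ s / exp 1 ^ s ≤ s.factorial := by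
    rw [div_le_iff₀ (by positivity), ← exp_nat_mul, mul_one, mul_comm,
      ← div_le_iff₀ (by positivity)]
    exact pow_div_factorial_le_exp _ hs'.le s
  calc (n.choose s : ℝ) ≤ (n : ℝ) ^ s / s.factorial := Nat.choose_le_pow_div s n
    _ ≤ (n : ℝ) ^ s / ((s : ℝ) ^ s / exp 1 ^ s) := by gcongr
    _ = (exp 1 * n / s) ^ s := by rw [div_pow, mul_pow]; field_simp

lemma sum_Icc_pow_self_le {N : ℕ} {b : ℕ → ℝ} {c : ℝ} (hc : 0 ≤ c)
    (hb0 : ∀ s ∈ Icc 1 N, 0 ≤ b s) (hb_half : ∀ s ∈ Icc 1 N, b s ≤ 1 / 2)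
    (hb_lin : ∀ s ∈ Icc 1 N, b s ≤ c * s) :
    ∑ s ∈ Icc 1 N, b s ^ s ≤ 4 * c := by
  have hgeom : HasSum (fun s : ℕ => (s : ℝ) * (1 / 2) ^ s) 2 := by
    have h := hasSum_coe_mul_geometric_of_norm_lt_one (r := (1 / 2 : ℝ)) (by norm_num)
    rwa [show (1 / 2 : ℝ) / (1 - 1 / 2) ^ 2 = 2 by norm_num] at h
  calc ∑ s ∈ Icc 1 N, b s ^ s ≤ ∑ s ∈ Icc 1 N, 2 * c * ((s : ℝ) * (1 / 2) ^ s) := by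
        refine sum_le_sum fun s hs => ?_
        obtain ⟨t, rfl⟩ : ∃ t, s = t + 1 := ⟨s - 1, by have := (mem_Icc.1 hs).1; omega⟩
        calc b (t + 1) ^ (t + 1) = b (t + 1) * b (t + 1) ^ t := pow_succ' _ _
          _ ≤ (c * (t + 1 : ℕ)) * (1 / 2) ^ t := by
              have := hb0 _ hs
              gcongr
              · exact hb_lin _ hs
              · exact hb_half _ hs
          _ = 2 * c * (((t + 1 : ℕ) : ℝ) * (1 / 2) ^ (t + 1)) := by ring
    _ = 2 * c * ∑ s ∈ Icc 1 N, (s : ℝ) * (1 / 2) ^ s := by rw [mul_sum]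
    _ ≤ 2 * c * 2 := by gcongr; exact sum_le_hasSum _ (fun _ _ => by positivity) hgeom
    _ = 4 * c := by ring

lemma Fintype.card_piFinset_le_pow_mul {ι α : Type*} [Fintype ι] [DecidableEq ι]
    {F G : ι → Finset α} (S : Finset ι) {x : ℝ}
    (hS : ∀ i ∈ S, (#(G i) : ℝ) ≤ x * #(F i)) (hSc : ∀ i ∉ S, #(G i) ≤ #(F i)) :
    (#(Fintype.piFinset G) : ℝ) ≤ x ^ #S * #(Fintype.piFinset F) := by
  simp only [Fintype.card_piFinset, Nat.cast_prod]
  calc ∏ i, (#(G i) : ℝ) ≤ ∏ i, (if i ∈ S then x else 1) * #(F i) := by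
        refine prod_le_prod (fun _ _ => by positivity) fun i _ => ?_
        split_ifs with hi
        · exact hS i hi
        · simpa using hSc i hi
    _ = x ^ #S * ∏ i, (#(F i) : ℝ) := by
        rw [prod_mul_distrib, prod_ite_mem, prod_const]

lemma sum_choose_mul_pow_le {β : ℝ} (hβ : 0 < β) {K n m N : ℕ} (hK : 2 ≤ K)
    (hsmall : exp 1 * β ^ (K - 2) ≤ 1 / 2) (hm : β * n ≤ m) (hN : (N : ℝ) ≤ β ^ 2 * n) :
    ∑ s ∈ Icc 1 N, (n.choose s : ℝ) * (((s : ℝ) / m) ^ K) ^ s ≤ 2 / (β ^ 2 * n) := by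
  rcases Nat.eq_zero_or_pos n with rfl | hn
  · obtain rfl : N = 0 := by exact_mod_cast le_antisymm (by simpa using hN) N.cast_nonneg
    simp
  obtain ⟨k, rfl⟩ := Nat.exists_eq_add_of_le' hK
  rw [Nat.add_sub_cancel] at hsmall
  have hn' : (0 : ℝ) < n := by exact_mod_cast hn
  have hm0 : (0 : ℝ) < m := lt_of_lt_of_le (by positivity) hm
  set b : ℕ → ℝ := fun s => exp 1 * ((s : ℝ) / m) ^ k * (n * s / m ^ 2)
  have hterm : ∀ s ∈ Icc 1 N,
      (n.choose s : ℝ) * (((s : ℝ) / m) ^ (k + 2)) ^ s ≤ b s ^ s := by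
    intro s hs
    have hs0 : (0 : ℝ) < s := by exact_mod_cast (mem_Icc.1 hs).1
    calc (n.choose s : ℝ) * (((s : ℝ) / m) ^ (k + 2)) ^ s
        ≤ (exp 1 * n / s) ^ s * (((s : ℝ) / m) ^ (k + 2)) ^ s := by
          gcongr; exact Nat.choose_le_exp_mul_div_pow n s
      _ = b s ^ s := by
          rw [← mul_pow]
          congr 1
          simp only [b]
          rw [pow_add]
          generalize ((s : ℝ) / m) ^ k = x
          field_simp
  have hb : ∀ s ∈ Icc 1 N, b s ≤ (n * s / m ^ 2) / 2 := by
    intro s hs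
    have hsβ : (s : ℝ) / m ≤ β := by
      rw [div_le_iff₀ hm0]
      nlinarith [(Nat.cast_le.2 (mem_Icc.1 hs).2).trans hN]
    calc b s ≤ exp 1 * β ^ k * (n * s / m ^ 2) := by simp only [b]; gcongr
      _ ≤ 1 / 2 * (n * s / m ^ 2) := by gcongr
      _ = _ := by ring
  calc ∑ s ∈ Icc 1 N, (n.choose s : ℝ) * (((s : ℝ) / m) ^ (k + 2)) ^ s
      ≤ ∑ s ∈ Icc 1 N, b s ^ s := sum_le_sum hterm
    _ ≤ 4 * (1 / (2 * β ^ 2 * n)) := by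
        refine sum_Icc_pow_self_le (by positivity) (fun s _ => by positivity) (fun s hs => ?_)
          (fun s hs => ?_)
        · calc b s ≤ (n * s / m ^ 2) / 2 := hb s hs
            _ ≤ (n * (β ^ 2 * n) / (β * n) ^ 2) / 2 := by
                gcongr
                exact (Nat.cast_le.2 (mem_Icc.1 hs).2).trans hN
            _ = 1 / 2 := by field_simp
        · calc b s ≤ (n * s / m ^ 2) / 2 := hb s hs
            _ ≤ (n * s / (β * n) ^ 2) / 2 := by gcongr
            _ = 1 / (2 * β ^ 2 * n) * s := by field_simp
    _ = 2 / (β ^ 2 * n) := by field_simp; ring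

section Model

variable {n K : ℕ} {A B : Fin n → Finset (Fin n)}

lemma validConfigs_eq_product :
    validConfigs n K A B = Fintype.piFinset (fun v => (A v).powersetCard K) ×ˢ
      Fintype.piFinset (fun v => (B v).powersetCard K) := by
  ext c
  simp only [validConfigs, mem_filter, mem_univ, true_and, mem_product, Fintype.mem_piFinset,
    mem_powersetCard]
  exact ⟨fun h => ⟨fun v => ⟨(h v).1, (h v).2.1⟩, fun v => (h v).2.2⟩,
    fun h v => ⟨(h.1 v).1, (h.1 v).2, h.2 v⟩⟩

lemma validConfigs_nonempty (hA : ∀ v, K ≤ (A v).card) (hB : ∀ v, K ≤ (B v).card) :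
    (validConfigs n K A B).Nonempty := by
  rw [validConfigs_eq_product]
  exact .product (Fintype.piFinset_nonempty.2 fun v => powersetCard_nonempty.2 (hA v))
    (Fintype.piFinset_nonempty.2 fun v => powersetCard_nonempty.2 (hB v))

lemma probOf_mono {E F : Config n → Prop} (h : ∀ c, E c → F c) :
    probOf n K A B E ≤ probOf n K A B F := by
  unfold probOf
  gcongr with c
  exact h c

lemma probOf_or_le (E F : Config n → Prop) :
    probOf n K A B (fun c => E c ∨ F c) ≤ probOf n K A B E + probOf n K A B F := by
  unfold probOf
  rw [← add_div]
  gcongr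
  norm_cast
  refine (card_le_card fun c hc => ?_).trans (card_union_le _ _)
  simp only [mem_filter, mem_union] at hc ⊢
  tauto

lemma probOf_exists_le_sum {ι : Type*} (T : Finset ι) (E : ι → Config n → Prop) :
    probOf n K A B (fun c => ∃ i ∈ T, E i c) ≤ ∑ i ∈ T, probOf n K A B (E i) := by
  unfold probOf
  rw [← sum_div]
  gcongr
  norm_cast
  refine (card_le_card fun c hc => ?_).trans card_biUnion_le
  simp only [mem_filter, mem_biUnion] at hc ⊢
  obtain ⟨hc, i, hi, hE⟩ := hc
  exact ⟨i, hi, hc, hE⟩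

lemma probOf_not (hV : (validConfigs n K A B).Nonempty) (E : Config n → Prop) :
    probOf n K A B (fun c => ¬ E c) = 1 - probOf n K A B E := by
  unfold probOf
  rw [eq_sub_iff_add_eq, ← add_div, ← Nat.cast_add, add_comm, card_filter_add_card_filter_not,
    div_self (by exact_mod_cast hV.card_pos.ne')]

lemma probOf_swap (E : Config n → Prop) :
    probOf n K A B (fun c => E c.swap) = probOf n K B A E := by
  unfold probOf
  have hV : validConfigs n K B A =
      (validConfigs n K A B).map ⟨Prod.swap, Prod.swap_injective⟩ := by
    rw [validConfigs_eq_product, validConfigs_eq_product, map_swap_product]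
  rw [hV, filter_map, card_map, card_map]
  rfl

lemma probOf_le_of_forall_mem {E : Config n → Prop} {T : Finset (Config n)} {x : ℝ}
    (hx : 0 ≤ x) (hET : ∀ c ∈ validConfigs n K A B, E c → c ∈ T)
    (hT : (#T : ℝ) ≤ x * #(validConfigs n K A B)) :
    probOf n K A B E ≤ x := by
  unfold probOf
  refine div_le_of_le_mul₀ (by positivity) hx (le_trans ?_ hT)
  exact_mod_cast card_le_card fun c hc => hET c (mem_filter.1 hc).1 (mem_filter.1 hc).2

lemma probOf_forall_subset_le {m : ℕ} (hA : ∀ v, #(A v) = m) {S : Finset (Fin n)}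
    (hSm : #S ≤ m) :
    probOf n K A B (fun c => ∀ i ∈ S, c.1 i ⊆ S) ≤ (((#S : ℝ) / m) ^ K) ^ #S := by
  set G : Fin n → Finset (Finset (Fin n)) :=
    fun v => ((A v).powersetCard K).filter fun t => v ∈ S → t ⊆ S
  have hG : ∀ v ∈ S, (#(G v) : ℝ) ≤ ((#S : ℝ) / m) ^ K * #((A v).powersetCard K) := by
    intro v hv
    have : G v ⊆ (A v ∩ S).powersetCard K := fun t ht => by
      simp only [G, mem_filter, mem_powersetCard] at ht ⊢
      exact ⟨subset_inter ht.1.1 (ht.2 hv), ht.1.2⟩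
    calc (#(G v) : ℝ) ≤ #((A v ∩ S).powersetCard K) := by exact_mod_cast card_le_card this
      _ ≤ (#S).choose K := by
          rw [card_powersetCard]
          exact_mod_cast Nat.choose_le_choose K (card_le_card inter_subset_right)
      _ ≤ _ := by rw [card_powersetCard, hA]; exact Nat.choose_le_div_pow_mul_choose hSm K
  refine probOf_le_of_forall_mem (by positivity)
    (T := Fintype.piFinset G ×ˢ Fintype.piFinset fun v => (B v).powersetCard K) ?_ ?_
  · intro c hc hS
    rw [validConfigs_eq_product, mem_product] at hc
    exact mem_product.2 ⟨Fintype.mem_piFinset.2 fun v =>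
      mem_filter.2 ⟨Fintype.mem_piFinset.1 hc.1 v, hS v⟩, hc.2⟩
  · rw [validConfigs_eq_product, card_product, card_product, Nat.cast_mul, Nat.cast_mul,
      ← mul_assoc]
    gcongr
    exact Fintype.card_piFinset_le_pow_mul S hG fun v _ => card_le_card (filter_subset _ _)

lemma forall_out_subset_of_not_exists_hasEdge {c : Config n} {S : Finset (Fin n)}
    (h : ¬ ∃ i ∈ S, ∃ j ∉ S, hasEdge c i j) : ∀ i ∈ S, c.1 i ⊆ S :=
  fun i hi j hj => by_contra fun hjS => h ⟨i, hi, j, hjS, Or.inl hj⟩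

lemma forall_in_subset_of_not_exists_hasEdge {c : Config n} {S : Finset (Fin n)}
    (h : ¬ ∃ i ∉ S, ∃ j ∈ S, hasEdge c i j) : ∀ j ∈ S, c.2 j ⊆ S :=
  fun j hj i hi => by_contra fun hiS => h ⟨i, hiS, j, hj, Or.inr hi⟩

lemma probOf_exists_small_set_without_edges_le {β : ℝ} {m : ℕ}
    (hβ0 : 0 < β) (hβ1 : β ≤ 1) (hA : ∀ v, #(A v) = m) (hB : ∀ v, #(B v) = m)
    (hm : β * n ≤ m) (hK : 2 ≤ K) (hsmall : exp 1 * β ^ (K - 2) ≤ 1 / 2) :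
    probOf n K A B (fun c => ¬ ∀ S : Finset (Fin n), S.Nonempty → (#S : ℝ) ≤ β ^ 2 * n →
      (∃ i ∈ S, ∃ j ∉ S, hasEdge c i j) ∧ (∃ i ∉ S, ∃ j ∈ S, hasEdge c i j)) ≤
      4 / (β ^ 2 * n) := by
  set N := ⌊β ^ 2 * n⌋₊
  have hN : (N : ℝ) ≤ β ^ 2 * n := Nat.floor_le (by positivity)
  have hSm : ∀ s ∈ Icc 1 N, ∀ S ∈ (univ : Finset (Fin n)).powersetCard s, #S ≤ m := by
    intro s hs S hS
    rw [mem_powersetCard_univ.1 hS]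
    have hβn : β ^ 2 * n ≤ β * n := by
      rw [sq, mul_assoc]; exact mul_le_of_le_one_left (by positivity) hβ1
    exact_mod_cast (Nat.cast_le.2 (mem_Icc.1 hs).2).trans (hN.trans (hβn.trans hm))
  calc _ ≤ probOf n K A B (fun c => ∃ s ∈ Icc 1 N,
        ∃ S ∈ (univ : Finset (Fin n)).powersetCard s,
          (∀ i ∈ S, c.1 i ⊆ S) ∨ (∀ i ∈ S, c.swap.1 i ⊆ S)) := by
        refine probOf_mono fun c hc => ?_
        obtain ⟨S, hc⟩ := not_forall.1 hc
        obtain ⟨hS, hc⟩ := Classical.not_imp.1 hc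
        obtain ⟨hSβ, hc⟩ := Classical.not_imp.1 hc
        refine ⟨#S, mem_Icc.2 ⟨hS.card_pos, Nat.le_floor hSβ⟩, S,
          mem_powersetCard_univ.2 rfl, ?_⟩
        rcases not_and_or.1 hc with hout | hin
        · exact .inl (forall_out_subset_of_not_exists_hasEdge hout)
        · exact .inr (forall_in_subset_of_not_exists_hasEdge hin)
    _ ≤ ∑ s ∈ Icc 1 N, ∑ S ∈ (univ : Finset (Fin n)).powersetCard s,
        (probOf n K A B (fun c => ∀ i ∈ S, c.1 i ⊆ S) +
          probOf n K A B (fun c => ∀ i ∈ S, c.swap.1 i ⊆ S)) := by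
        refine (probOf_exists_le_sum _ _).trans (sum_le_sum fun s _ => ?_)
        exact (probOf_exists_le_sum _ _).trans (sum_le_sum fun S _ => probOf_or_le _ _)
    _ ≤ ∑ s ∈ Icc 1 N, ∑ S ∈ (univ : Finset (Fin n)).powersetCard s,
        2 * (((s : ℝ) / m) ^ K) ^ s := by
        refine sum_le_sum fun s hs => sum_le_sum fun S hS => ?_
        rw [two_mul, ← mem_powersetCard_univ.1 hS]
        exact add_le_add (probOf_forall_subset_le hA (hSm s hs S hS))
          ((probOf_swap fun c => ∀ i ∈ S, c.1 i ⊆ S).trans_le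
            (probOf_forall_subset_le hB (hSm s hs S hS)))
    _ = 2 * ∑ s ∈ Icc 1 N, (n.choose s : ℝ) * (((s : ℝ) / m) ^ K) ^ s := by
        rw [mul_sum]
        refine sum_congr rfl fun s _ => ?_
        rw [sum_const, card_powersetCard, card_univ, Fintype.card_fin, nsmul_eq_mul]
        ring
    _ ≤ 2 * (2 / (β ^ 2 * n)) := by gcongr; exact sum_choose_mul_pow_le hβ0 hK hsmall hm hN
    _ = 4 / (β ^ 2 * n) := by ring

end Model

/-- Fix `α ∈ (0,1)`.  There is `K₀ = K₀(α)` such that for every integer `K ≥ K₀`, with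
high probability (probability at least `1 − δ` for any `δ > 0` once `n` is large, for
every adversarial choice of the sets `A, B`) the random digraph `D` of the adversarial
K-out/K-in model satisfies: every nonempty `S ⊆ [n]` with `|S| ≤ (1−α)²·n` has both an
edge of `D` leaving `S` and an edge of `D` entering `S`. -/
theorem whp_small_sets_have_in_and_out_edges (α : ℝ) (hα0 : 0 < α) (hα1 : α < 1) :
    ∃ K₀ : ℕ, ∀ K : ℕ, K₀ ≤ K → ∀ δ : ℝ, 0 < δ →
      ∃ N : ℕ, ∀ n : ℕ, N ≤ n →
        ∀ A B : Fin n → Finset (Fin n), ValidAdversary α A B →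
          1 - δ ≤ probOf n K A B (fun c =>
            ∀ S : Finset (Fin n), S.Nonempty → (S.card : ℝ) ≤ (1 - α) ^ 2 * n →
              (∃ i ∈ S, ∃ j ∉ S, hasEdge c i j) ∧ (∃ i ∉ S, ∃ j ∈ S, hasEdge c i j)) := by
  have hβ0 : 0 < 1 - α := by linarith
  obtain ⟨K₁, hK₁⟩ := eventually_atTop.1 <|
    ((tendsto_pow_atTop_nhds_zero_of_lt_one hβ0.le (by linarith : 1 - α < 1)).const_mul
      (exp 1)).eventually (gt_mem_nhds (by norm_num : exp 1 * 0 < 1 / 2))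
  refine ⟨K₁ + 2, fun K hK δ hδ => ?_⟩
  obtain ⟨N, hN⟩ := eventually_atTop.1 <|
    ((tendsto_const_div_atTop_nhds_zero_nat (4 / (1 - α) ^ 2)).eventually (ge_mem_nhds hδ)).and
      (tendsto_natCast_atTop_atTop.eventually_ge_atTop (K / (1 - α)))
  refine ⟨N, fun n hn A B hAB => ?_⟩
  obtain ⟨hnδ, hnK⟩ := hN n hn
  have hm : (1 - α) * n ≤ ⌈(1 - α) * n⌉₊ := Nat.le_ceil _
  have hKm : K ≤ ⌈(1 - α) * n⌉₊ := by
    have := (div_le_iff₀' hβ0).1 hnK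
    exact_mod_cast this.trans hm
  have hV : (validConfigs n K A B).Nonempty := validConfigs_nonempty
    (fun v => (hAB v).2.1 ▸ hKm) (fun v => (hAB v).2.2.2 ▸ hKm)
  have hbad := probOf_exists_small_set_without_edges_le hβ0 (by linarith) (fun v => (hAB v).2.1)
    (fun v => (hAB v).2.2.2) hm (by omega) (hK₁ (K - 2) (by omega)).le
  rw [div_div] at hnδ
  linarith [(probOf_not hV _).symm.trans_le hbad]
end

section
/- Let D be a digraph on a finite nonempty vertex set V, and let D′ be a digraph on V whose edge set contains all edges of D and which, for every pair (S,T) where S is a sink strong component of D and T is a source strong component of D, contains at least one edge from some vertex of S to some vertex of T. Then D′ is strongly connected. -/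
open scoped Classical

/-- The strong component of a vertex `v` in the digraph `D`: all vertices `u` that are
mutually reachable with `v` by directed paths. -/
noncomputable def strongComp {V : Type*} [Fintype V] (D : V → V → Prop) (v : V) :
    Finset V :=
  Finset.univ.filter (fun u =>
    Relation.ReflTransGen D v u ∧ Relation.ReflTransGen D u v)

/-- `C` is a sink strong component of `D`: it is a strong component and no edge of `D`
leaves it. -/
def IsSinkComp {V : Type*} [Fintype V] (D : V → V → Prop) (C : Finset V) : Prop :=
  (∃ v : V, C = strongComp D v) ∧ ∀ i ∈ C, ∀ j : V, D i j → j ∈ C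

/-- `C` is a source strong component of `D`: it is a strong component and no edge of `D`
enters it. -/
def IsSourceComp {V : Type*} [Fintype V] (D : V → V → Prop) (C : Finset V) : Prop :=
  (∃ v : V, C = strongComp D v) ∧ ∀ j ∈ C, ∀ i : V, D i j → i ∈ C

/-! Follow `D`-paths from `u` to a vertex whose strong component is a sink `S`, and `D`-paths
backwards from `v` to a source component `T`. Inside a strong component every vertex reaches
every other, so the `D'`-edge from `S` to `T` closes a `D'`-path from `u` to `v`. -/

open Relation

section

variable {V : Type*} [Fintype V] (D : V → V → Prop)

lemma mem_strongComp {v u : V} :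
    u ∈ strongComp D v ↔ ReflTransGen D v u ∧ ReflTransGen D u v := by
  simp [strongComp]

lemma strongComp_swap (v : V) : strongComp (Function.swap D) v = strongComp D v := by
  ext u
  simp only [mem_strongComp, reflTransGen_swap, and_comm]

lemma isSourceComp_iff_isSinkComp_swap (C : Finset V) :
    IsSourceComp D C ↔ IsSinkComp (Function.swap D) C := by
  simp only [IsSourceComp, IsSinkComp, strongComp_swap, Function.swap]

lemma exists_reflTransGen_terminal (v : V) :
    ∃ w, ReflTransGen D v w ∧ ∀ x, ReflTransGen D w x → ReflTransGen D x w := by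
  let reach : V → Finset V := fun x => Finset.univ.filter (ReflTransGen D x)
  have mem_reach {x y : V} : y ∈ reach x ↔ ReflTransGen D x y := by simp [reach]
  obtain ⟨w, hvw, hmin⟩ :=
    (reach v).exists_min_image (fun x => (reach x).card) ⟨v, mem_reach.2 .refl⟩
  rw [mem_reach] at hvw
  refine ⟨w, hvw, fun x hwx => ?_⟩
  -- `reach x ⊆ reach w`, and `w` minimises the size of `reach`, so the two are equal
  have heq : reach x = reach w := Finset.eq_of_subset_of_card_le
    (fun y hy => mem_reach.2 (hwx.trans (mem_reach.1 hy))) (hmin x (mem_reach.2 (hvw.trans hwx)))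
  exact mem_reach.1 (heq ▸ mem_reach.2 .refl)

lemma isSinkComp_strongComp_of_terminal {w : V}
    (hw : ∀ x, ReflTransGen D w x → ReflTransGen D x w) : IsSinkComp D (strongComp D w) := by
  refine ⟨⟨w, rfl⟩, fun i hi j hij => ?_⟩
  rw [mem_strongComp] at hi ⊢
  have hwj : ReflTransGen D w j := hi.1.tail hij
  exact ⟨hwj, hw j hwj⟩

lemma exists_isSinkComp_forall_reflTransGen (v : V) :
    ∃ S, IsSinkComp D S ∧ ∀ s ∈ S, ReflTransGen D v s := by
  obtain ⟨w, hvw, hw⟩ := exists_reflTransGen_terminal D v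
  exact ⟨strongComp D w, isSinkComp_strongComp_of_terminal D hw,
    fun s hs => hvw.trans ((mem_strongComp D).1 hs).1⟩

lemma exists_isSourceComp_forall_reflTransGen (v : V) :
    ∃ T, IsSourceComp D T ∧ ∀ t ∈ T, ReflTransGen D t v := by
  obtain ⟨T, hT, hreach⟩ := exists_isSinkComp_forall_reflTransGen (Function.swap D) v
  exact ⟨T, (isSourceComp_iff_isSinkComp_swap D T).2 hT,
    fun t ht => reflTransGen_swap.1 (hreach t ht)⟩

end

theorem strongly_connected_of_sink_to_source_general {V : Type*} [Fintype V]
    (D D' : V → V → Prop)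
    (hsub : ∀ u v : V, D u v → D' u v)
    (hlink : ∀ S T : Finset V, IsSinkComp D S → IsSourceComp D T →
      ∃ i ∈ S, ∃ j ∈ T, D' i j) :
    ∀ u v : V, Relation.ReflTransGen D' u v := by
  intro u v
  obtain ⟨S, hS, hSreach⟩ := exists_isSinkComp_forall_reflTransGen D u
  obtain ⟨T, hT, hTreach⟩ := exists_isSourceComp_forall_reflTransGen D v
  obtain ⟨i, hi, j, hj, hij⟩ := hlink S T hS hT
  have lift {a b : V} (h : ReflTransGen D a b) : ReflTransGen D' a b :=
    ReflTransGen.mono hsub _ _ h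
  exact (lift (hSreach i hi)).trans (.head hij (lift (hTreach j hj)))

/-- Let `D` be a digraph on a finite nonempty vertex set `V`, and let `D'` be a digraph on
`V` containing all edges of `D` and, for every sink strong component `S` of `D` and every
source strong component `T` of `D`, at least one edge from a vertex of `S` to a vertex of
`T`.  Then `D'` is strongly connected. -/
theorem strongly_connected_of_sink_to_source {V : Type*} [Fintype V] [DecidableEq V]
    [Nonempty V] (D D' : V → V → Prop)
    (hsub : ∀ u v : V, D u v → D' u v)
    (hlink : ∀ S T : Finset V, IsSinkComp D S → IsSourceComp D T →
      ∃ i ∈ S, ∃ j ∈ T, D' i j) :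
    ∀ u v : V, Relation.ReflTransGen D' u v :=
  strongly_connected_of_sink_to_source_general D D' hsub hlink
end
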